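/- arXiv:2407.18618 — 7 statements merged into one kernel-verified Lean document; each statement's English description precedes it below -/
import Mathlib

section
/- For a Tychonoff space X, if the space C_p(X) of continuous real-valued functions with the topology of pointwise convergence does not have the property (B), then X has the property (κ): every pairwise disjoint sequence of finite subsets of X has an infinite subsequence admitting a point-finite open expansion. -/
/-!
Given a disjoint sequence `(S m)` of finite sets, let `A n` be the set of `f ∈ C_p(X)` that satisfy
`|f| ≤ n` at some point of every `S m` with `m ≥ n`. Each `A n` is closed, and nowhere dense: a basic
neighbourhood of `f` fixes `f` only on a finite set, which meets only finitely many `S m`, and by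
complete regularity `f` can be changed off that set to exceed `n` in absolute value on such an `S m`.
Since `C_p(X)` fails (B), some compact `K` lies in no `A n`, giving `f_n ∈ K` and `m_n ≥ n` with
`|f_n| > n` on `S (m_n)`. The open sets `{|f_n| > n}` along a subsequence with increasing `m_n` are
point-finite because `K` is pointwise bounded.
-/

open Set Filter Topology Function

section Separation

variable {X : Type*} [TopologicalSpace X] [CompletelyRegularSpace X]

theorem exists_continuous_eqOn_zero_one_le {F I : Set X} (hF : F.Finite)
    (hI : IsClosed I) (hFI : Disjoint F I) :
    ∃ h : X → ℝ, Continuous h ∧ EqOn h 0 I ∧ ∀ x ∈ F, 1 ≤ h x := by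
  have hsep : ∀ x ∈ F, ∃ u : X → unitInterval, Continuous u ∧ u x = 0 ∧ EqOn u 1 I :=
    fun x hx => CompletelyRegularSpace.completely_regular x I hI (hFI.notMem_of_mem_left hx)
  choose! u hu hux huI using hsep
  refine ⟨fun y => ∑ x ∈ hF.toFinset, (1 - (u x y : ℝ)), ?_, ?_, ?_⟩
  · exact continuous_finsetSum _ fun x hx =>
      continuous_const.sub (continuous_subtype_val.comp (hu x (hF.mem_toFinset.1 hx)))
  · intro y hy
    refine Finset.sum_eq_zero fun x hx => ?_
    simp [huI x (hF.mem_toFinset.1 hx) hy]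
  · intro x hx
    calc (1 : ℝ) = 1 - (u x x : ℝ) := by simp [hux x hx]
      _ ≤ ∑ z ∈ hF.toFinset, (1 - (u z x : ℝ)) :=
        Finset.single_le_sum (f := fun z => 1 - (u z x : ℝ))
          (fun z _ => sub_nonneg.2 (u z x).2.2) (hF.mem_toFinset.2 hx)

theorem exists_continuous_eqOn_lt_abs {F I : Set X} (hF : F.Finite) (hI : IsClosed I)
    (hFI : Disjoint F I) {f : X → ℝ} (hf : Continuous f) (c : ℝ) :
    ∃ g : X → ℝ, Continuous g ∧ EqOn g f I ∧ ∀ x ∈ F, c < |g x| := by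
  obtain ⟨h, hc, hI0, hF1⟩ := exists_continuous_eqOn_zero_one_le hF hI hFI
  obtain ⟨M, hM⟩ := (hF.image fun x => c - f x).bddAbove
  set N := max M 0 + 1
  have hMN : ∀ x ∈ F, c - f x < N := fun x hx =>
    (hM (mem_image_of_mem _ hx)).trans_lt ((le_max_left M 0).trans_lt (lt_add_one _))
  refine ⟨fun y => f y + N * h y, hf.add (continuous_const.mul hc), fun y hy => ?_,
    fun x hx => ?_⟩
  · simp [hI0 hy]
  · calc c < f x + N := by linarith [hMN x hx]
      _ ≤ f x + N * h x := by gcongr; exact le_mul_of_one_le_right (by positivity) (hF1 x hx)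
      _ ≤ |f x + N * h x| := le_abs_self _

end Separation

theorem Pairwise.finite_setOf_not_disjoint {ι X : Type*} {S : ι → Set X}
    (hS : Pairwise (Disjoint on S)) {I : Set X} (hI : I.Finite) :
    {m | ¬Disjoint (S m) I}.Finite := by
  refine (hI.biUnion fun x _ => (?_ : {m | x ∈ S m}.Subsingleton).finite).subset ?_
  · exact fun a ha b hb => by_contra fun hab => disjoint_left.1 (hS hab) ha hb
  · intro m hm
    obtain ⟨x, hxS, hxI⟩ := not_disjoint_iff.1 hm
    exact mem_biUnion hxI hxS

theorem finite_setOf_natCast_lt_of_bddAbove {u : ℕ → ℝ} (hu : BddAbove (range u)) :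
    {k : ℕ | (k : ℝ) < u k}.Finite := by
  obtain ⟨C, hC⟩ := hu
  exact (finite_Iio ⌈C⌉₊).subset fun k hk =>
    Nat.lt_ceil.2 (lt_of_lt_of_le hk (hC (mem_range_self k)))

abbrev Cp (X : Type*) [TopologicalSpace X] : Type _ := {f : X → ℝ // Continuous f}

namespace Cp

variable {X : Type*} [TopologicalSpace X]

theorem exists_finite_forall_eqOn_mem {f : Cp X} {U : Set (Cp X)} (hU : U ∈ 𝓝 f) :
    ∃ I : Set X, I.Finite ∧ ∀ g : Cp X, EqOn g.1 f.1 I → g ∈ U := by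
  rw [nhds_subtype_eq_comap, mem_comap] at hU
  obtain ⟨T, hT, hTU⟩ := hU
  rw [nhds_pi, Filter.mem_pi] at hT
  obtain ⟨I, hI, t, ht, hIt⟩ := hT
  refine ⟨I, hI, fun g hg => hTU (hIt fun i hi => ?_)⟩
  simpa only [hg hi] using mem_of_mem_nhds (ht i)

/-- The sets `A n` above. -/
def smallOnTail (S : ℕ → Set X) (n : ℕ) : Set (Cp X) :=
  {f | ∀ m, n ≤ m → ∃ x ∈ S m, |f.1 x| ≤ n}

variable {S : ℕ → Set X}

theorem isClosed_smallOnTail (hS : ∀ m, (S m).Finite) (n : ℕ) :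
    IsClosed (smallOnTail S n) := by
  have : smallOnTail S n = ⋂ m, ⋂ (_ : n ≤ m), ⋃ x ∈ S m, {f : Cp X | |f.1 x| ≤ n} := by
    ext f; simp [smallOnTail]
  rw [this]
  exact isClosed_iInter fun m => isClosed_iInter fun _ => (hS m).isClosed_biUnion fun x _ =>
    isClosed_le ((continuous_apply x).comp continuous_subtype_val).abs continuous_const

theorem isNowhereDense_smallOnTail [CompletelyRegularSpace X] [T1Space X]
    (hS : ∀ m, (S m).Finite) (hdisj : Pairwise (Disjoint on S)) (n : ℕ) : IsNowhereDense (smallOnTail S n) := by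
  rw [(isClosed_smallOnTail hS n).isNowhereDense_iff, eq_empty_iff_forall_notMem]
  intro f hf
  obtain ⟨I, hI, hIA⟩ := exists_finite_forall_eqOn_mem (mem_interior_iff_mem_nhds.1 hf)
  obtain ⟨m, hm, hmn⟩ := (hdisj.finite_setOf_not_disjoint hI).infinite_compl.exists_gt n
  obtain ⟨g, hg, hgf, hgS⟩ :=
    exists_continuous_eqOn_lt_abs (hS m) hI.isClosed (not_not.1 hm) f.2 n
  obtain ⟨x, hx, hgx⟩ := hIA ⟨g, hg⟩ hgf m hmn.le
  exact (hgS x hx).not_ge hgx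

theorem exists_pointFinite_expansion_of_isCompact {K : Set (Cp X)} (hK : IsCompact K)
    (hKS : ∀ n, ¬K ⊆ smallOnTail S n) :
    ∃ φ : ℕ → ℕ, StrictMono φ ∧ ∃ W : ℕ → Set X,
      (∀ k, IsOpen (W k) ∧ S (φ k) ⊆ W k) ∧ ∀ x : X, {k | x ∈ W k}.Finite := by
  have hbig : ∀ n, ∃ f ∈ K, ∃ m, n ≤ m ∧ ∀ x ∈ S m, (n : ℝ) < |f.1 x| := by
    intro n
    obtain ⟨f, hfK, hf⟩ := not_subset.1 (hKS n)
    simp only [smallOnTail, mem_ofPred_eq, not_forall, not_exists, not_and, not_le] at hf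
    obtain ⟨m, hnm, hm⟩ := hf
    exact ⟨f, hfK, m, hnm, hm⟩
  choose f hfK m hnm hfm using hbig
  obtain ⟨ψ, hψ, hmψ⟩ := strictMono_subseq_of_id_le hnm
  refine ⟨m ∘ ψ, hmψ, fun k => {x | (k : ℝ) < |(f (ψ k)).1 x|}, fun k => ⟨?_, ?_⟩, fun x => ?_⟩
  · exact isOpen_lt continuous_const (f (ψ k)).2.abs
  · exact fun x hx => (Nat.cast_le.2 hψ.le_apply).trans_lt (hfm _ x hx)
  · have hev : Continuous fun g : Cp X => |g.1 x| :=
      ((continuous_apply x).comp continuous_subtype_val).abs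
    exact finite_setOf_natCast_lt_of_bddAbove <| (hK.image hev).bddAbove.mono <|
      range_subset_iff.2 fun k => mem_image_of_mem (fun g : Cp X => |g.1 x|) (hfK (ψ k))

end Cp

/-- If `C_p(X)` does not have property (B), then `X` has property (κ): every pairwise
disjoint sequence of finite subsets of `X` has an infinite subsequence admitting a
point-finite open expansion. -/
theorem not_B_of_Cp_implies_kappa {X : Type*} [TopologicalSpace X] [T35Space X]
    (hB : ¬ ∃ A : ℕ → Set {f : X → ℝ // Continuous f},
      (∀ n, IsClosed (A n) ∧ IsNowhereDense (A n)) ∧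
      ∀ K : Set {f : X → ℝ // Continuous f}, IsCompact K → ∃ n, K ⊆ A n) :
    ∀ S : ℕ → Set X, (∀ n, (S n).Finite) → Pairwise (Function.onFun Disjoint S) →
      ∃ φ : ℕ → ℕ, StrictMono φ ∧ ∃ W : ℕ → Set X,
        (∀ k, IsOpen (W k) ∧ S (φ k) ⊆ W k) ∧ ∀ x : X, {k | x ∈ W k}.Finite := by
  intro S hS hdisj
  obtain ⟨K, hK, hKS⟩ : ∃ K : Set (Cp X), IsCompact K ∧ ∀ n, ¬K ⊆ Cp.smallOnTail S n := by
    by_contra! h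
    exact hB ⟨Cp.smallOnTail S, fun n => ⟨Cp.isClosed_smallOnTail hS n,
      Cp.isNowhereDense_smallOnTail hS hdisj n⟩, h⟩
  exact Cp.exists_pointFinite_expansion_of_isCompact hK hKS
end

section
/- Let X be a Tychonoff space, H ⊆ X a closed set, F ⊆ X a finite set, ε > 0, and s : F → ℝ a function with |s(x)| < ε for all x ∈ H ∩ F. Then there exists a continuous function g : X → ℝ such that g(x) = s(x) for all x ∈ F and |g(x)| < ε for all x ∈ H. -/
/-!
Interpolate `s` on `F` by a continuous `g₁` (a finite Lagrange sum of bumps), and clip it to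
`[-ε', ε']`, where `ε' < ε` bounds `|s|` on the finite set `H ∩ F`. The clipped function is
small on `H` and still equals `s` on `H ∩ F`; the error on `F \ H` is corrected by adding
an interpolant that vanishes on `H`.
-/

open Set

theorem Set.Finite.exists_le_lt_forall_le {α β : Type*} [LinearOrder β] {S : Set α}
    (hS : S.Finite) {f : α → β} {a b : β} (hab : a < b) (hf : ∀ x ∈ S, f x < b) :
    ∃ c, a ≤ c ∧ c < b ∧ ∀ x ∈ S, f x ≤ c := by
  induction S, hS using Set.Finite.induction_on with
  | empty => exact ⟨a, le_rfl, hab, by simp⟩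
  | @insert y S _ _ ih =>
    obtain ⟨c, hac, hcb, hc⟩ := ih fun x hx => hf x (mem_insert_of_mem y hx)
    refine ⟨max c (f y), le_max_of_le_left hac, max_lt hcb (hf y (mem_insert y S)), ?_⟩
    rintro x (rfl | hx)
    · exact le_max_right _ _
    · exact le_max_of_le_left (hc x hx)

theorem CompletelyRegularSpace.exists_continuous_eq_one_eqOn_zero {X : Type*}
    [TopologicalSpace X] [CompletelyRegularSpace X] {K : Set X} (hK : IsClosed K) {a : X}
    (ha : a ∉ K) : ∃ f : X → ℝ, Continuous f ∧ f a = 1 ∧ EqOn f 0 K := by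
  obtain ⟨f, hf, hfa, hfK⟩ := CompletelyRegularSpace.completely_regular a K hK ha
  refine ⟨fun x => 1 - (f x : ℝ), by fun_prop, by simp [hfa], fun x hx => ?_⟩
  simp [hfK hx]

theorem exists_continuous_eqOn_finite_eqOn_zero {X : Type*} [TopologicalSpace X] [T1Space X]
    [CompletelyRegularSpace X] {K F : Set X} (hK : IsClosed K) (hF : F.Finite)
    (hKF : Disjoint F K) (t : X → ℝ) :
    ∃ g : X → ℝ, Continuous g ∧ EqOn g t F ∧ EqOn g 0 K := by
  have hbump : ∀ a ∈ F, ∃ χ : X → ℝ, Continuous χ ∧ χ a = 1 ∧ EqOn χ 0 (K ∪ F \ {a}) :=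
    fun a ha => CompletelyRegularSpace.exists_continuous_eq_one_eqOn_zero
      (hK.union hF.sdiff.isClosed) (by simp [hKF.notMem_of_mem_left ha])
  choose! χ hχ hχa hχ0 using hbump
  refine ⟨fun x => ∑ a ∈ hF.toFinset, t a * χ a x,
    continuous_finsetSum _ fun a ha => continuous_const.mul (hχ a (hF.mem_toFinset.1 ha)),
    fun x hx => ?_, fun x hx => ?_⟩
  · dsimp only
    rw [Finset.sum_eq_single_of_mem x (hF.mem_toFinset.2 hx), hχa x hx, mul_one]
    intro a ha hax
    rw [hχ0 a (hF.mem_toFinset.1 ha) (Or.inr ⟨hx, hax.symm⟩), Pi.zero_apply, mul_zero]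
  · exact Finset.sum_eq_zero fun a ha => by
      rw [hχ0 a (hF.mem_toFinset.1 ha) (Or.inl hx), Pi.zero_apply, mul_zero]

/-- Let `H ⊆ X` be closed, `F ⊆ X` finite, `ε > 0` and `s : X → ℝ` with `|s x| < ε`
for `x ∈ H ∩ F`. Then there is a continuous `g : X → ℝ` with `g = s` on `F` and
`|g| < ε` on `H`. -/
theorem modification_lemma {X : Type*} [TopologicalSpace X] [T35Space X]
    (H : Set X) (hH : IsClosed H) (F : Set X) (hF : F.Finite)
    (ε : ℝ) (hε : 0 < ε) (s : X → ℝ) (hs : ∀ x ∈ H ∩ F, |s x| < ε) :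
    ∃ g : X → ℝ, Continuous g ∧ (∀ x ∈ F, g x = s x) ∧ ∀ x ∈ H, |g x| < ε := by
  obtain ⟨ε', hε'0, hε'ε, hsε'⟩ := (hF.inter_of_right H).exists_le_lt_forall_le hε hs
  have hε' : -ε' ≤ ε' := by linarith
  obtain ⟨g₁, hg₁, hg₁s, -⟩ :=
    exists_continuous_eqOn_finite_eqOn_zero isClosed_empty hF (disjoint_empty F) s
  set g₂ : X → ℝ := fun x => projIcc (-ε') ε' hε' (g₁ x)
  have hg₂s : EqOn g₂ s (H ∩ F) := fun x hx => by
    simp only [g₂, hg₁s hx.2, projIcc_of_mem hε' (abs_le.1 (hsε' x hx))]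
  obtain ⟨g₃, hg₃, hg₃s, hg₃H⟩ :=
    exists_continuous_eqOn_finite_eqOn_zero hH hF.sdiff disjoint_sdiff_left (s - g₂)
  refine ⟨g₂ + g₃, (continuous_subtype_val.comp (continuous_projIcc.comp hg₁)).add hg₃,
    fun x hx => ?_, fun x hx => ?_⟩
  · by_cases hxH : x ∈ H
    · simp [hg₃H hxH, hg₂s ⟨hxH, hx⟩]
    · simp [hg₃s ⟨hx, hxH⟩]
  · simp only [Pi.add_apply, hg₃H hx, Pi.zero_apply, add_zero]
    exact (abs_le.2 (projIcc (-ε') ε' hε' (g₁ x)).2).trans_lt hε'ε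
end

section
/- For any Tychonoff space X, if X has the property (κ), then C_p(X) does not have the property (B). -/
/-!
Let `A n` be closed nowhere dense sets in `C_p(X)` such that every compact set lies in one of
them; their finite unions `D n` are again nowhere dense and increase. Recursively pick
`g n ∉ D n` with `|g n| < 1/(n+1)` on the finite set `T n` of coordinates used so far, and a
finite `F n` such that every function agreeing with `g n` on `F n` avoids `D n`; then put
`T (n+1) = T n ∪ F n`. The fresh coordinates `F n \ T n` are pairwise disjoint, so (κ) yields a
subsequence `φ` and a point-finite open family `W k ⊇ F (φ k) \ T (φ k)`. Multiplying `g (φ k)`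
by a bump that is `1` on `F (φ k)` and `0` outside `W k ∪ {|g (φ k)| < 1/(φ k+1)}` gives
`f k ∉ D (φ k)` with `f k → 0` pointwise. The sequence together with its limit is compact, so it
lies in some `A n ⊆ D (φ n)`, contradicting `f n ∉ D (φ n)`.
-/

open Filter Function Topology Set

local notation "C_p(" X ")" => {f : X → ℝ // Continuous f}

lemma pairwise_disjoint_sdiff_of_le_succ {α : Type*} [GeneralizedBooleanAlgebra α]
    {F T : ℕ → α} (hT : Monotone T) (hFT : ∀ n, F n ≤ T (n + 1)) :
    Pairwise (Disjoint on fun n => F n \ T n) :=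
  (pairwise_disjoint_on _).2 fun _ _ hmn =>
    disjoint_sdiff_self_right.mono_left (sdiff_le.trans ((hFT _).trans (hT hmn)))

lemma tendsto_nhds_zero_of_abs_le_off_pointFinite {X : Type*} {f : ℕ → X → ℝ} {W : ℕ → Set X}
    (hW : ∀ x, {k | x ∈ W k}.Finite) {ε : ℕ → ℝ} (hε : Tendsto ε atTop (𝓝 0))
    (hf : ∀ k, ∀ x ∉ W k, |f k x| ≤ ε k) : Tendsto f atTop (𝓝 0) :=
  tendsto_pi_nhds.2 fun x => squeeze_zero_norm'
    ((Nat.cofinite_eq_atTop ▸ (hW x).eventually_cofinite_notMem).mono fun k hk => hf k x hk) hε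

lemma exists_finset_eqOn_subset_of_mem_nhds {ι Y : Type*} [TopologicalSpace Y]
    {s : Set (ι → Y)} {g : s} {V : Set s} (hV : V ∈ 𝓝 g) :
    ∃ F : Finset ι, {h : s | EqOn h.1 g.1 (F : Set ι)} ⊆ V := by
  obtain ⟨U, hU, hUV⟩ := (mem_nhds_subtype s g V).1 hV
  rw [nhds_pi, Filter.mem_pi] at hU
  obtain ⟨I, hI, t, ht, hIU⟩ := hU
  refine ⟨hI.toFinset, fun h hh => hUV (hIU fun i hi => ?_)⟩
  rw [hh (hI.mem_toFinset.2 hi)]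
  exact mem_of_mem_nhds (ht i)

section

variable {X : Type*} [TopologicalSpace X]

lemma IsNowhereDense.union {s t : Set X} (hs : IsNowhereDense s) (ht : IsNowhereDense t) :
    IsNowhereDense (s ∪ t) := by
  rw [IsNowhereDense, closure_union]
  exact (interior_union_isClosed_of_interior_empty isClosed_closure ht).trans hs

lemma isNowhereDense_accumulate {A : ℕ → Set X} (hA : ∀ n, IsNowhereDense (A n)) (n : ℕ) :
    IsNowhereDense (accumulate A n) := by
  induction n with
  | zero => rw [accumulate_zero_nat]; exact hA 0
  | succ n ih => rw [accumulate_succ]; exact ih.union (hA (n + 1))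

theorem exists_continuous_zero_one_of_finite [CompletelyRegularSpace X] {s t : Set X}
    (hs : s.Finite) (ht : IsClosed t) (hd : Disjoint s t) :
    ∃ f : C(X, ℝ), EqOn f 0 s ∧ EqOn f 1 t ∧ ∀ x, f x ∈ Icc (0 : ℝ) 1 := by
  induction s, hs using Set.Finite.induction_on with
  | empty => exact ⟨1, eqOn_empty _ _, fun _ _ => rfl, fun _ => by simp⟩
  | @insert a s _ _ ih =>
    obtain ⟨f, hf0, hf1, hf⟩ := ih (hd.mono_left (subset_insert a s))
    obtain ⟨q, hq, hqa, hqt⟩ := CompletelyRegularSpace.completely_regular a t ht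
      (disjoint_left.1 hd (mem_insert a s))
    refine ⟨f * ⟨fun x => q x, continuous_subtype_val.comp hq⟩, ?_, fun x hx => ?_, fun x => ?_⟩
    · rintro x (rfl | hx)
      · simp [hqa]
      · simp [hf0 hx]
    · simp [hf1 hx, hqt hx]
    · exact ⟨mul_nonneg (hf x).1 (q x).2.1, mul_le_one₀ (hf x).2 (q x).2.1 (q x).2.2⟩

lemma exists_eqOn_abs_lt_of_forall_mem_or_abs_lt [CompletelyRegularSpace X] {g : X → ℝ}
    (hg : Continuous g) {F : Set X} (hF : F.Finite) {W : Set X} (hW : IsOpen W) {ε : ℝ}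
    (hε : 0 < ε) (hFW : ∀ x ∈ F, x ∈ W ∨ |g x| < ε) :
    ∃ f : X → ℝ, Continuous f ∧ EqOn f g F ∧ ∀ x ∉ W, |f x| < ε := by
  have hU : IsOpen (W ∪ {x | |g x| < ε}) :=
    hW.union (isOpen_lt (continuous_abs.comp hg) continuous_const)
  obtain ⟨q, hq0, hq1, hq⟩ := exists_continuous_zero_one_of_finite hF hU.isClosed_compl
    (disjoint_compl_right_iff_subset.2 hFW)
  refine ⟨fun x => g x * (1 - q x), hg.mul (continuous_const.sub q.continuous),
    fun x hx => by simp [hq0 hx], fun x hxW => ?_⟩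
  by_cases hx : |g x| < ε
  · calc |g x * (1 - q x)| ≤ |g x| := by
          rw [abs_mul]
          exact mul_le_of_le_one_right (abs_nonneg _)
            (abs_le.2 ⟨by linarith [(hq x).2], by linarith [(hq x).1]⟩)
      _ < ε := hx
  · simpa [hq1 (show x ∉ W ∪ {x | |g x| < ε} by simp [hxW, hx])] using hε

lemma exists_abs_lt_and_eqOn_subset_compl_of_isNowhereDense
    {D : Set C_p(X)} (hD : IsNowhereDense D) (T : Finset X) {ε : ℝ} (hε : 0 < ε) :
    ∃ g : C_p(X), (∀ x ∈ T, |g.1 x| < ε) ∧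
      ∃ F : Finset X, {h : C_p(X) | EqOn h.1 g.1 (F : Set X)} ⊆ Dᶜ := by
  have hO : IsOpen {h : C_p(X) | ∀ x ∈ T, |h.1 x| < ε} := by
    simp only [Set.ofPred_forall]
    exact isOpen_biInter_finset fun x _ =>
      isOpen_lt (continuous_abs.comp ((continuous_apply x).comp continuous_subtype_val))
        continuous_const
  obtain ⟨g, hgD, hgT⟩ := (interior_eq_empty_iff_dense_compl.1 hD).exists_mem_open hO
    ⟨⟨0, continuous_const⟩, fun _ _ => by simpa using hε⟩
  obtain ⟨F, hF⟩ := exists_finset_eqOn_subset_of_mem_nhds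
    (isClosed_closure.isOpen_compl.mem_nhds hgD)
  exact ⟨g, hgT, F, hF.trans (compl_subset_compl.2 subset_closure)⟩

lemma exists_seq_abs_lt_and_eqOn_subset_compl {D : ℕ → Set C_p(X)}
    (hD : ∀ n, IsNowhereDense (D n)) {ε : ℕ → ℝ} (hε : ∀ n, 0 < ε n) :
    ∃ (g : ℕ → C_p(X)) (F T : ℕ → Finset X), Monotone T ∧ (∀ n, F n ⊆ T (n + 1)) ∧
      (∀ n, ∀ x ∈ T n, |(g n).1 x| < ε n) ∧
      ∀ n, {h : C_p(X) | EqOn h.1 (g n).1 (F n : Set X)} ⊆ (D n)ᶜ := by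
  classical
  choose g hgT F hF using fun n T =>
    exists_abs_lt_and_eqOn_subset_compl_of_isNowhereDense (hD n) T (hε n)
  let T : ℕ → Finset X := fun n => Nat.rec ∅ (fun k Tk => Tk ∪ F k Tk) n
  exact ⟨fun n => g n (T n), fun n => F n (T n), T,
    monotone_nat_of_le_succ fun _ => Finset.subset_union_left,
    fun _ => Finset.subset_union_right, fun n => hgT n (T n), fun n => hF n (T n)⟩

end

/-- If `X` has property (κ), then `C_p(X)` does not have property (B). -/
theorem kappa_implies_not_B_of_Cp {X : Type*} [TopologicalSpace X] [T35Space X]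
    (hκ : ∀ S : ℕ → Set X, (∀ n, (S n).Finite) → Pairwise (Function.onFun Disjoint S) →
      ∃ φ : ℕ → ℕ, StrictMono φ ∧ ∃ W : ℕ → Set X,
        (∀ k, IsOpen (W k) ∧ S (φ k) ⊆ W k) ∧ ∀ x : X, {k | x ∈ W k}.Finite) :
    ¬ ∃ A : ℕ → Set {f : X → ℝ // Continuous f},
      (∀ n, IsClosed (A n) ∧ IsNowhereDense (A n)) ∧
      ∀ K : Set {f : X → ℝ // Continuous f}, IsCompact K → ∃ n, K ⊆ A n := by
  rintro ⟨A, hA, hAK⟩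
  obtain ⟨g, F, T, hT, hFT, hgT, hgD⟩ := exists_seq_abs_lt_and_eqOn_subset_compl
    (isNowhereDense_accumulate fun n => (hA n).2) (ε := fun n => 1 / ((n : ℝ) + 1))
    fun _ => Nat.one_div_pos_of_nat
  obtain ⟨φ, hφ, W, hW, hWx⟩ := hκ (fun n => (F n : Set X) \ T n)
    (fun n => (F n).finite_toSet.sdiff)
    (pairwise_disjoint_sdiff_of_le_succ (fun _ _ hmn => Finset.coe_subset.2 (hT hmn))
      fun n => Finset.coe_subset.2 (hFT n))
  have hf : ∀ k, ∃ f : C_p(X), EqOn f.1 (g (φ k)).1 (F (φ k) : Set X) ∧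
      ∀ x ∉ W k, |f.1 x| < 1 / ((φ k : ℝ) + 1) := fun k => by
    obtain ⟨f, hf, hfg, hfW⟩ := exists_eqOn_abs_lt_of_forall_mem_or_abs_lt (g (φ k)).2
      (F (φ k)).finite_toSet (hW k).1 Nat.one_div_pos_of_nat fun x hx =>
        (em (x ∈ T (φ k))).symm.imp (fun hxT => (hW k).2 ⟨hx, hxT⟩) (hgT _ x)
    exact ⟨⟨f, hf⟩, hfg, hfW⟩
  choose f hfg hfW using hf
  have hf0 : Tendsto f atTop (𝓝 ⟨0, continuous_const⟩) :=
    tendsto_subtype_rng.2 <| tendsto_nhds_zero_of_abs_le_off_pointFinite hWx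
      (tendsto_one_div_add_atTop_nhds_zero_nat.comp hφ.tendsto_atTop) fun k x hx =>
        (hfW k x hx).le
  obtain ⟨n, hn⟩ := hAK _ hf0.isCompact_insert_range
  exact hgD (φ n) (hfg n) <| monotone_accumulate hφ.le_apply <|
    subset_accumulate <| hn (mem_insert_of_mem _ (mem_range_self n))
end

section
/- If a nonempty Tychonoff space X is κ-Fréchet–Urysohn, then X does not have the property (B). -/
open Set Filter Topology

/-- Union of two closed sets with empty interior has empty interior. -/
lemma interior_union_empty {X : Type*} [TopologicalSpace X] {s t : Set X}
    (hs : IsClosed s) (hsi : interior s = ∅) (hti : interior t = ∅) :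
    interior (s ∪ t) = ∅ := by
  have h1 : interior (s ∪ t) \ s ⊆ interior t := by
    apply interior_maximal
    · intro y hy
      rcases interior_subset hy.1 with h | h
      · exact absurd h hy.2
      · exact h
    · exact isOpen_interior.sdiff hs
  have h2 : interior (s ∪ t) ⊆ s := by
    intro y hy
    by_contra hys
    have : y ∈ interior t := h1 ⟨hy, hys⟩
    rw [hti] at this
    exact this
  have : interior (s ∪ t) ⊆ interior s := interior_maximal h2 isOpen_interior
  rw [hsi] at this
  exact eq_empty_of_subset_empty this

/-- A nonempty κ-Fréchet–Urysohn Tychonoff space does not have property (B). -/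
theorem kappaFU_not_B {X : Type*} [TopologicalSpace X] [T35Space X] [Nonempty X]
    (hκFU : ∀ U : Set X, IsOpen U → ∀ x ∈ closure U,
      ∃ u : ℕ → X, (∀ n, u n ∈ U) ∧ Filter.Tendsto u Filter.atTop (nhds x)) :
    ¬ ∃ A : ℕ → Set X,
      (∀ n, IsClosed (A n) ∧ IsNowhereDense (A n)) ∧
      ∀ K : Set X, IsCompact K → ∃ n, K ⊆ A n := by
  rintro ⟨A, hA, hcov⟩
  -- Increasing family B n = A 0 ∪ ... ∪ A n
  set B : ℕ → Set X := fun n => Nat.rec (A 0) (fun k Bk => Bk ∪ A (k + 1)) n with hB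
  have hBsucc : ∀ n, B (n + 1) = B n ∪ A (n + 1) := fun n => rfl
  have hBclosed : ∀ n, IsClosed (B n) := by
    intro n
    induction n with
    | zero => exact (hA 0).1
    | succ k ih => exact ih.union (hA (k + 1)).1
  have hAint : ∀ n, interior (A n) = ∅ := fun n =>
    ((hA n).1.isNowhereDense_iff).mp (hA n).2
  have hBint : ∀ n, interior (B n) = ∅ := by
    intro n
    induction n with
    | zero => exact hAint 0
    | succ k ih => exact interior_union_empty (hBclosed k) ih (hAint (k + 1))
  have hBmono : Monotone B := by
    apply monotone_nat_of_le_succ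
    intro n
    rw [hBsucc]
    exact subset_union_left
  have hAB : ∀ n, A n ⊆ B n := by
    intro n
    cases n with
    | zero => exact le_rfl
    | succ k => rw [hBsucc]; exact subset_union_right
  have hBcov : ∀ K : Set X, IsCompact K → ∃ n, K ⊆ B n := by
    intro K hK
    obtain ⟨n, hn⟩ := hcov K hK
    exact ⟨n, hn.trans (hAB n)⟩
  -- pick a point
  obtain ⟨x⟩ := ‹Nonempty X›
  -- x is not isolated
  have hx_not_iso : x ∈ closure ({x}ᶜ : Set X) := by
    by_contra hcl
    have hopen : IsOpen (closure ({x}ᶜ : Set X))ᶜ := isClosed_closure.isOpen_compl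
    have hsub : (closure ({x}ᶜ : Set X))ᶜ ⊆ {x} := by
      intro y hy
      by_contra hyx
      exact hy (subset_closure hyx)
    obtain ⟨n, hn⟩ := hcov {x} isCompact_singleton
    have : x ∈ interior (A n) := by
      apply mem_interior.mpr
      exact ⟨_, hsub.trans hn, hopen, hcl⟩
    rw [hAint n] at this
    exact this
  -- a nontrivial sequence converging to x
  obtain ⟨t, ht, htconv⟩ := hκFU _ isOpen_compl_singleton x hx_not_iso
  -- separate each t m from x
  have hsep : ∀ m : ℕ, ∃ O : Set X, IsOpen O ∧ t m ∈ O ∧ x ∉ closure O := by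
    intro m
    obtain ⟨O, V, hO, hV, htO, hxV, hOV⟩ := t2_separation (ht m)
    refine ⟨O, hO, htO, fun hx => ?_⟩
    obtain ⟨y, hyV, hyO⟩ := mem_closure_iff.mp hx V hV hxV
    exact absurd rfl (hOV.ne_of_mem hyO hyV)
  choose O hOopen htO hxO using hsep
  -- the open sets W m, and U their union
  set W : ℕ → Set X := fun m => O m \ B m with hW
  have hWopen : ∀ m, IsOpen (W m) := fun m => (hOopen m).sdiff (hBclosed m)
  have htW : ∀ m, t m ∈ closure (W m) := by
    intro m
    rw [mem_closure_iff]
    intro V hV htV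
    by_contra hVIW
    push_neg at hVIW
    have hsub : V ∩ O m ⊆ B m := by
      intro y hy
      by_contra hyB
      exact (eq_empty_iff_forall_notMem.mp hVIW y) ⟨hy.1, hy.2, hyB⟩
    have : t m ∈ interior (B m) :=
      mem_interior.mpr ⟨V ∩ O m, hsub, hV.inter (hOopen m), htV, htO m⟩
    rw [hBint m] at this
    exact this
  set U : Set X := ⋃ m, W m with hU
  have hUopen : IsOpen U := isOpen_iUnion hWopen
  have hxU : x ∈ closure U := by
    rw [mem_closure_iff]
    intro V hV hxV
    obtain ⟨m, hm⟩ := (htconv.eventually (hV.mem_nhds hxV)).exists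
    obtain ⟨y, hyV, hyW⟩ := mem_closure_iff.mp (htW m) V hV hm
    exact ⟨y, hyV, mem_iUnion.mpr ⟨m, hyW⟩⟩
  -- the κFU sequence in U
  obtain ⟨u, hu, huconv⟩ := hκFU U hUopen x hxU
  obtain ⟨n, hKn⟩ := hBcov _ huconv.isCompact_insert_range
  -- the neighborhood of x avoiding U ∩ B n
  set N : Set X := ⋂ m ∈ Finset.range n, (closure (O m))ᶜ with hN
  have hNopen : IsOpen N :=
    isOpen_biInter_finset fun m _ => isClosed_closure.isOpen_compl
  have hxN : x ∈ N := by
    rw [hN, mem_iInter₂]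
    exact fun m _ => hxO m
  obtain ⟨k, hk⟩ := (huconv.eventually (hNopen.mem_nhds hxN)).exists
  -- u k ∈ U : u k ∈ W m for some m
  obtain ⟨m, hm⟩ := mem_iUnion.mp (hu k)
  have hukB : u k ∈ B n := hKn (mem_insert_iff.mpr (Or.inr ⟨k, rfl⟩))
  rcases lt_or_ge m n with hmn | hmn
  · -- m < n : u k ∈ O m but u k ∈ N avoids closure (O m)
    have : u k ∉ closure (O m) := by
      have := mem_iInter₂.mp hk m (Finset.mem_range.mpr hmn)
      exact this
    exact this (subset_closure hm.1)
  · -- n ≤ m : u k ∉ B m ⊇ B n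
    exact hm.2 (hBmono hmn hukB)
end

section
/- For any Tychonoff space X, if the space C_k(X) of continuous real-valued functions with the compact-open topology does not have the property (B), then every moving off family of nonempty compact subsets of X has a countably infinite strongly compact-finite subfamily. -/
open Set Filter Topology

lemma aux_sep {X : Type*} [TopologicalSpace X] [T35Space X] {K L : Set X}
    (hK : IsCompact K) (hL : IsClosed L) (hd : Disjoint K L) :
    ∃ φ : C(X, ℝ), (∀ x, 0 ≤ φ x) ∧ (∀ x ∈ L, φ x = 0) ∧ (∀ x ∈ K, (1:ℝ)/2 < φ x) := by
  classical
  have hsep : ∀ x : K, ∃ g : C(X, ℝ), (∀ y, 0 ≤ g y) ∧ (∀ y ∈ L, g y = 0) ∧ g x = 1 := by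
    intro ⟨x, hx⟩
    obtain ⟨f, hfc, hfx, hfL⟩ :=
      CompletelyRegularSpace.completely_regular x L hL (disjoint_left.mp hd hx)
    refine ⟨⟨fun y => 1 - (f y : ℝ), by continuity⟩, ?_, ?_, ?_⟩
    · intro y; simp only [ContinuousMap.coe_mk]
      linarith [(f y).2.2]
    · intro y hy; simp only [ContinuousMap.coe_mk, hfL hy]; norm_num
    · simp only [ContinuousMap.coe_mk, hfx]; norm_num
  choose g hg0 hgL hgx using hsep
  have hcover : K ⊆ ⋃ x : K, {y | (1:ℝ)/2 < g x y} := by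
    intro y hy
    refine mem_iUnion.mpr ⟨⟨y, hy⟩, ?_⟩
    have := hgx ⟨y, hy⟩
    simp only [mem_setOf_eq, this]
    norm_num
  obtain ⟨t, ht⟩ := hK.elim_finite_subcover (fun x : K => {y | (1:ℝ)/2 < g x y})
    (fun x => isOpen_lt continuous_const (g x).continuous) hcover
  have hsum : ∀ y, (∑ x ∈ t, g x) y = ∑ x ∈ t, g x y := by
    intro y; simp
  refine ⟨∑ x ∈ t, g x, ?_, ?_, ?_⟩
  · intro y
    rw [hsum]
    exact Finset.sum_nonneg fun i _ => hg0 i y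
  · intro y hy
    rw [hsum]
    exact Finset.sum_eq_zero fun i _ => hgL i y hy
  · intro y hy
    obtain ⟨i, hit, hiy⟩ := mem_iUnion₂.mp (ht hy)
    rw [hsum]
    calc (1:ℝ)/2 < g i y := hiy
    _ ≤ ∑ x ∈ t, g x y := Finset.single_le_sum (fun j _ => hg0 j y) hit

lemma aux_nhds_basis {X : Type*} [TopologicalSpace X] (f : C(X, ℝ)) :
    (𝓝 f).HasBasis (fun p : Set X × ℝ => IsCompact p.1 ∧ 0 < p.2)
      (fun p => {g : C(X, ℝ) | ∀ x ∈ p.1, dist (f x) (g x) < p.2}) :=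
  nhds_basis_uniformity' (Metric.uniformity_basis_dist.compactConvergenceUniformity)

lemma aux_bound {X : Type*} [TopologicalSpace X] {C : Set C(X, ℝ)} (hC : IsCompact C)
    {L : Set X} (hL : IsCompact L) :
    ∃ S : ℝ, ∀ f ∈ C, ∀ x ∈ L, ‖f x‖ ≤ S := by
  haveI : CompactSpace L := isCompact_iff_compactSpace.mp hL
  have him : IsCompact ((fun F : C(X, ℝ) => F.restrict L) '' C) :=
    hC.image (ContinuousMap.continuous_restrict L)
  obtain ⟨S, hS⟩ := him.isBounded.subset_closedBall 0
  refine ⟨S, fun f hf x hx => ?_⟩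
  have h1 : f.restrict L ∈ Metric.closedBall 0 S := hS ⟨f, hf, rfl⟩
  have h2 : ‖f.restrict L‖ ≤ S := by
    simpa [Metric.mem_closedBall] using h1
  calc ‖f x‖ = ‖(f.restrict L) ⟨x, hx⟩‖ := by simp [ContinuousMap.restrict]
  _ ≤ ‖f.restrict L‖ := ContinuousMap.norm_coe_le_norm _ _
  _ ≤ S := h2

/-- If `C_k(X)` does not have property (B), then every moving off family of nonempty
compact subsets of `X` has a countably infinite strongly compact-finite subfamily. -/
theorem not_B_of_Ck_implies_moving_off {X : Type*} [TopologicalSpace X] [T35Space X]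
    (hB : ¬ ∃ A : ℕ → Set C(X, ℝ),
      (∀ n, IsClosed (A n) ∧ IsNowhereDense (A n)) ∧
      ∀ K : Set C(X, ℝ), IsCompact K → ∃ n, K ⊆ A n) :
    ∀ 𝒦 : Set (Set X), 𝒦.Nonempty → (∀ K ∈ 𝒦, K.Nonempty ∧ IsCompact K) →
      (∀ L : Set X, IsCompact L → ∃ K ∈ 𝒦, Disjoint K L) →
      ∃ K : ℕ → Set X, Function.Injective K ∧ (∀ n, K n ∈ 𝒦) ∧
        ∃ U : ℕ → Set X, (∀ n, IsOpen (U n) ∧ K n ⊆ U n) ∧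
          ∀ L : Set X, IsCompact L → {n | (U n ∩ L).Nonempty}.Finite := by
  classical
  intro 𝒦 h𝒦ne h𝒦 hmo
  -- the candidate absorbing family
  set A : ℕ → Set C(X, ℝ) := fun m => {f | ∀ K ∈ 𝒦, ∃ x ∈ K, f x ≤ (m : ℝ)} with hA
  -- density step
  have hdense : ∀ (m : ℕ) (f : C(X, ℝ)) (L : Set X) (ε : ℝ), IsCompact L → 0 < ε →
      ∃ g : C(X, ℝ), (∀ x ∈ L, dist (f x) (g x) < ε) ∧
        ∃ K ∈ 𝒦, ∀ x ∈ K, (m : ℝ) < g x := by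
    intro m f L ε hL hε
    obtain ⟨K, hK𝒦, hKL⟩ := hmo L hL
    obtain ⟨hKne, hKc⟩ := h𝒦 K hK𝒦
    obtain ⟨φ, hφ0, hφL, hφK⟩ := aux_sep hKc hL.isClosed hKL
    obtain ⟨S, hS⟩ := hKc.exists_bound_of_continuousOn f.continuous.continuousOn
    have hS0 : 0 ≤ S := le_trans (norm_nonneg _) (hS _ hKne.choose_spec)
    set c : ℝ := 2 * ((m : ℝ) + S + 1) with hc
    have hcpos : 0 < c := by positivity
    refine ⟨f + c • φ, ?_, K, hK𝒦, ?_⟩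
    · intro x hx
      have hgx : (f + c • φ) x = f x := by
        simp [hφL x hx]
      rw [hgx]
      simpa using hε
    · intro x hx
      have h1 : c / 2 < c * φ x := by
        have := hφK x hx
        nlinarith
      have h2 : -S ≤ f x := by
        have hb : |f x| ≤ S := by simpa [Real.norm_eq_abs] using hS x hx
        linarith [(abs_le.mp hb).1]
      simp only [ContinuousMap.add_apply, ContinuousMap.smul_apply, smul_eq_mul]
      have hch : c / 2 = (m : ℝ) + S + 1 := by rw [hc]; ring
      linarith
  -- each A m is closed
  have hclosed : ∀ m, IsClosed (A m) := by
    intro m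
    rw [← isOpen_compl_iff, isOpen_iff_mem_nhds]
    intro f hf
    simp only [hA, mem_compl_iff, mem_setOf_eq] at hf
    push_neg at hf
    obtain ⟨K, hK𝒦, hfK⟩ := hf
    obtain ⟨hKne, hKc⟩ := h𝒦 K hK𝒦
    obtain ⟨x₀, hx₀K, hmin⟩ := hKc.exists_isMinOn hKne f.continuous.continuousOn
    have hδ : 0 < f x₀ - m := by linarith [hfK x₀ hx₀K]
    refine Filter.mem_of_superset
      ((aux_nhds_basis f).mem_of_mem (i := (K, f x₀ - (m : ℝ))) ⟨hKc, hδ⟩) ?_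
    intro g hg
    simp only [hA, mem_compl_iff, mem_setOf_eq]
    push_neg
    refine ⟨K, hK𝒦, fun x hx => ?_⟩
    have h1 : dist (f x) (g x) < f x₀ - m := hg x hx
    have h2 : f x₀ ≤ f x := hmin hx
    have h3 : |f x - g x| < f x₀ - m := by rwa [Real.dist_eq] at h1
    linarith [(abs_lt.mp h3).2]
  -- each A m is nowhere dense
  have hnwd : ∀ m, IsNowhereDense (A m) := by
    intro m
    rw [(hclosed m).isNowhereDense_iff, eq_empty_iff_forall_notMem]
    intro f hf
    have hmem : A m ∈ 𝓝 f := mem_interior_iff_mem_nhds.mp hf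
    obtain ⟨⟨L, ε⟩, ⟨hL, hε⟩, hsub⟩ := (aux_nhds_basis f).mem_iff.mp hmem
    obtain ⟨g, hgL, K, hK𝒦, hgK⟩ := hdense m f L ε hL hε
    have hgA : g ∈ A m := hsub hgL
    obtain ⟨x, hxK, hxle⟩ := hgA K hK𝒦
    exact absurd hxle (not_le.mpr (hgK x hxK))
  -- apply the failure of property (B)
  have hnotabs : ∃ C : Set C(X, ℝ), IsCompact C ∧ ∀ n, ¬ C ⊆ A n := by
    by_contra h
    push_neg at h
    exact hB ⟨A, fun n => ⟨hclosed n, hnwd n⟩, fun K hK => h K hK⟩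
  obtain ⟨C, hCc, hCn⟩ := hnotabs
  -- pick witnesses
  have hwit : ∀ m : ℕ, ∃ f ∈ C, ∃ K ∈ 𝒦, ∀ x ∈ K, (m : ℝ) < f x := by
    intro m
    obtain ⟨f, hfC, hfA⟩ := not_subset.mp (hCn m)
    simp only [hA, mem_setOf_eq] at hfA
    push_neg at hfA
    obtain ⟨K, hK𝒦, hK⟩ := hfA
    exact ⟨f, hfC, K, hK𝒦, hK⟩
  choose F hFC Km hKm𝒦 hbig using hwit
  -- each value of Km is attained only finitely often
  have hfib : ∀ m₀, {m | Km m = Km m₀}.Finite := by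
    intro m₀
    obtain ⟨S, hS⟩ := aux_bound hCc (h𝒦 (Km m₀) (hKm𝒦 m₀)).2
    obtain ⟨x₀, hx₀⟩ := (h𝒦 (Km m₀) (hKm𝒦 m₀)).1
    refine Set.Finite.subset (Set.finite_Iio (⌈S⌉₊ + 1)) ?_
    intro m hm
    simp only [mem_setOf_eq] at hm
    have hx₀m : x₀ ∈ Km m := hm ▸ hx₀
    have h1 : (m : ℝ) < F m x₀ := hbig m x₀ hx₀m
    have h2 : ‖F m x₀‖ ≤ S := hS (F m) (hFC m) x₀ hx₀
    have h3 : (m : ℝ) < S := lt_of_lt_of_le h1 (le_trans (le_abs_self _) h2)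
    exact mem_Iio.mpr (Nat.lt_succ_of_lt (Nat.lt_ceil.mpr h3))
  -- a bound past which Km differs
  set bnd : ℕ → ℕ := fun m => sSup {m' | Km m' = Km m} + 1 with hbnd
  have hbnd_lt : ∀ m m', Km m' = Km m → m' < bnd m := by
    intro m m' h
    have : m' ≤ sSup {m' | Km m' = Km m} := le_csSup (hfib m).bddAbove h
    simp only [hbnd]
    omega
  -- the strictly increasing selection
  set g : ℕ → ℕ := fun j => Nat.rec 0 (fun _ gj => max (bnd gj) (gj + 1)) j with hg
  have hgsucc : ∀ j, g (j + 1) = max (bnd (g j)) (g j + 1) := fun j => rfl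
  have hgmono : StrictMono g := strictMono_nat_of_lt_succ fun j => by
    rw [hgsucc]; omega
  have hkey : ∀ i j, i < j → bnd (g i) ≤ g j := by
    intro i j hij
    have h1 : bnd (g i) ≤ g (i + 1) := by rw [hgsucc]; omega
    exact le_trans h1 (hgmono.monotone hij)
  have hne2 : ∀ i j, i < j → Km (g j) ≠ Km (g i) := by
    intro i j hij heq
    have h1 := hbnd_lt (g i) (g j) heq
    have h2 := hkey i j hij
    omega
  have hKinj : Function.Injective fun j => Km (g j) := by
    intro i j hij
    simp only at hij
    rcases lt_trichotomy i j with h | h | h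
    · exact absurd hij.symm (hne2 i j h)
    · exact h
    · exact absurd hij (hne2 j i h)
  refine ⟨fun j => Km (g j), hKinj, fun j => hKm𝒦 (g j),
    fun j => {x | ((g j : ℕ) : ℝ) < F (g j) x}, ?_, ?_⟩
  · intro j
    exact ⟨isOpen_lt continuous_const (F (g j)).continuous, fun x hx => hbig (g j) x hx⟩
  · intro L hL
    obtain ⟨S, hS⟩ := aux_bound hCc hL
    refine Set.Finite.subset ((Set.finite_Iio (⌈S⌉₊ + 1)).preimage hgmono.injective.injOn) ?_
    intro j hj
    obtain ⟨x, hxU, hxL⟩ := hj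
    simp only [mem_setOf_eq] at hxU
    have h2 : ‖F (g j) x‖ ≤ S := hS (F (g j)) (hFC (g j)) x hxL
    have h3 : ((g j : ℕ) : ℝ) < S := lt_of_lt_of_le hxU (le_trans (le_abs_self _) h2)
    simp only [mem_preimage, mem_Iio]
    exact Nat.lt_succ_of_lt (Nat.lt_ceil.mpr h3)
end

section
/- Let X be a Tychonoff space and 𝒦 a moving off family of nonempty compact subsets of X. For each n ∈ ℕ, the set U_n = {f ∈ C_k(X) : ∃ K ∈ 𝒦, f(K) ⊆ (n, ∞)} is open and dense in C_k(X). -/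
open Set Filter

/-- In a completely regular Hausdorff space, a compact set can be separated from a disjoint
closed set by a continuous real function that is `1` on the compact set and `0` on the
closed set. -/
lemma exists_one_zero_of_isCompact_t35 {X : Type*} [TopologicalSpace X] [T35Space X]
    {K L : Set X} (hK : IsCompact K) (hL : IsClosed L) (hd : Disjoint K L) :
    ∃ φ : C(X, ℝ), (∀ x ∈ K, φ x = 1) ∧ (∀ x ∈ L, φ x = 0) := by
  classical
  -- for each x ∈ K, a function vanishing at x and equal to 1 on L
  have hsep : ∀ x ∈ K, ∃ f : X → unitInterval, Continuous f ∧ f x = 0 ∧ EqOn f 1 L := by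
    intro x hx
    exact CompletelyRegularSpace.completely_regular x L hL (disjoint_left.mp hd hx)
  choose! f hfc hf0 hf1 using hsep
  -- open cover of K by sets where f x < 1/2
  have hcover : K ⊆ ⋃ x ∈ K, {y | ((f x y : ℝ)) < 1/2} := by
    intro x hx
    refine mem_biUnion hx ?_
    simp [hf0 x hx]
  obtain ⟨t0, htK0, htfin, htcover⟩ := hK.elim_finite_subcover_image
    (fun x hx => (isOpen_lt (continuous_subtype_val.comp (hfc x hx)) continuous_const)) hcover
  set t : Finset X := htfin.toFinset with ht
  have htK : ∀ x ∈ t, x ∈ K := fun x hx => htK0 (by simpa [ht] using hx)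
  -- the product of the chosen functions
  set h : X → ℝ := fun y => ∏ x ∈ t, (f x y : ℝ) with hh
  have hhc : Continuous h := by
    apply continuous_finset_prod
    intro x hx
    exact continuous_subtype_val.comp (hfc x (htK _ hx))
  have hhL : ∀ y ∈ L, h y = 1 := by
    intro y hy
    simp only [hh]
    refine Finset.prod_eq_one fun x hx => ?_
    have := hf1 x (htK _ hx) hy
    simpa using congrArg Subtype.val this
  have hhK : ∀ y ∈ K, h y < 1/2 := by
    intro y hy
    obtain ⟨x, hxt, hxy⟩ : ∃ x ∈ t, (f x y : ℝ) < 1/2 := by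
      have := htcover hy
      simpa [ht] using this
    have hle : h y ≤ (f x y : ℝ) := by
      have : h y = (f x y : ℝ) * ∏ z ∈ t.erase x, (f z y : ℝ) :=
        (Finset.mul_prod_erase t _ hxt).symm
      rw [this]
      have h1 : ∏ z ∈ t.erase x, (f z y : ℝ) ≤ 1 :=
        Finset.prod_le_one (fun z hz => (f z y).2.1) (fun z hz => (f z y).2.2)
      have h0 : (0:ℝ) ≤ (f x y : ℝ) := (f x y).2.1
      nlinarith [Finset.prod_nonneg (fun z (hz : z ∈ t.erase x) => (f z y).2.1)]
    exact lt_of_le_of_lt hle hxy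
  -- φ = min 1 (2 * (1 - h))
  refine ⟨⟨fun y => min 1 (2 * (1 - h y)), ?_⟩, ?_, ?_⟩
  · exact continuous_const.min (continuous_const.mul (continuous_const.sub hhc))
  · intro x hx
    have := hhK x hx
    simp only [ContinuousMap.coe_mk]
    rw [min_eq_left]
    linarith
  · intro x hx
    have := hhL x hx
    simp only [ContinuousMap.coe_mk, this]
    norm_num

/-- For a moving off family `𝒦` of nonempty compact subsets of `X` and `n ∈ ℕ`, the
set `U_n = {f ∈ C_k(X) : ∃ K ∈ 𝒦, f(K) ⊆ (n, ∞)}` is open and dense in `C_k(X)`. -/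
theorem Un_open_dense_Ck {X : Type*} [TopologicalSpace X] [T35Space X]
    (𝒦 : Set (Set X)) (h𝒦 : 𝒦.Nonempty) (hmem : ∀ K ∈ 𝒦, K.Nonempty ∧ IsCompact K)
    (hmo : ∀ L : Set X, IsCompact L → ∃ K ∈ 𝒦, Disjoint K L) (n : ℕ) :
    IsOpen {f : C(X, ℝ) | ∃ K ∈ 𝒦, ∀ x ∈ K, (n : ℝ) < f x} ∧
    Dense {f : C(X, ℝ) | ∃ K ∈ 𝒦, ∀ x ∈ K, (n : ℝ) < f x} := by
  constructor
  · -- openness: union of basic compact-open sets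
    have : {f : C(X, ℝ) | ∃ K ∈ 𝒦, ∀ x ∈ K, (n : ℝ) < f x}
        = ⋃ K ∈ 𝒦, {f : C(X, ℝ) | MapsTo f K (Ioi (n : ℝ))} := by
      ext f
      simp [MapsTo, mem_Ioi]
    rw [this]
    exact isOpen_biUnion fun K hK =>
      ContinuousMap.isOpen_setOf_mapsTo (hmem K hK).2 isOpen_Ioi
  · -- density
    rw [dense_iff_inter_open]
    intro O hO ⟨f, hfO⟩
    -- use the basis of neighborhoods coming from the uniformity of compact convergence
    have hb := nhds_basis_uniformity' (x := f)
      (ContinuousMap.hasBasis_compactConvergenceUniformity (α := X) (β := ℝ))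
    obtain ⟨⟨L, V⟩, ⟨hLc, hV⟩, hsub⟩ := hb.mem_iff.mp (hO.mem_nhds hfO)
    obtain ⟨K, hK𝒦, hdisj⟩ := hmo L hLc
    obtain ⟨φ, hφK, hφL⟩ := exists_one_zero_of_isCompact_t35 (hmem K hK𝒦).2
      hLc.isClosed hdisj
    set g : C(X, ℝ) := f + φ * (ContinuousMap.const X ((n : ℝ) + 1) - f) with hg
    refine ⟨g, ?_, K, hK𝒦, ?_⟩
    · apply hsub
      intro x hx
      have : g x = f x := by
        simp only [hg, ContinuousMap.add_apply, ContinuousMap.mul_apply,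
          ContinuousMap.sub_apply, ContinuousMap.const_apply, hφL x hx]
        ring
      rw [this]
      exact refl_mem_uniformity hV
    · intro x hx
      have : g x = (n : ℝ) + 1 := by
        simp only [hg, ContinuousMap.add_apply, ContinuousMap.mul_apply,
          ContinuousMap.sub_apply, ContinuousMap.const_apply, hφK x hx]
        ring
      rw [this]
      linarith
end

section
/- Every countable Tychonoff space has the property (κ). -/
/-!
Index the points of `X` injectively by `ℕ` and let `F k` be the finite set of points of index
at most `k`.
A finite set meets only finitely many members of a disjoint family, so one can pick indices
`n₀ < n₁ < ⋯` with `S nₖ` disjoint from `F k`. In a `T₁` space `W k := (F k)ᶜ` is open and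
contains `S nₖ`, and a point `x` lies in `W k` only for `k` below its index.
-/

open Filter Function Set

theorem Pairwise.eventually_cofinite_disjoint {ι α : Type*} {S : ι → Set α}
    (hS : Pairwise (Disjoint on S)) {F : Set α} (hF : F.Finite) :
    ∀ᶠ i in cofinite, Disjoint (S i) F := by
  have hfiber (x : α) : ∀ᶠ i in cofinite, x ∉ S i :=
    (subsingleton_setOfPred_mem_iff_pairwise_disjoint.2 hS x).finite.eventually_cofinite_notMem
  filter_upwards [(eventually_all_finite hF).2 fun x _ => hfiber x] with i hi
  exact disjoint_right.2 hi

/-- Every countable Tychonoff space has property (κ). -/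
theorem countable_has_kappa {X : Type*} [TopologicalSpace X] [T35Space X] [Countable X] :
    ∀ S : ℕ → Set X, (∀ n, (S n).Finite) → Pairwise (Function.onFun Disjoint S) →
      ∃ φ : ℕ → ℕ, StrictMono φ ∧ ∃ W : ℕ → Set X,
        (∀ k, IsOpen (W k) ∧ S (φ k) ⊆ W k) ∧ ∀ x : X, {k | x ∈ W k}.Finite := by
  intro S _ hS
  obtain ⟨f, hf⟩ := Countable.exists_injective_nat X
  have hF (k : ℕ) : (f ⁻¹' Iic k).Finite := (finite_Iic k).preimage hf.injOn
  obtain ⟨φ, hφ, hφF⟩ := extraction_forall_of_eventually fun k => by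
    rw [← Nat.cofinite_eq_atTop]
    exact hS.eventually_cofinite_disjoint (hF k)
  refine ⟨φ, hφ, fun k => (f ⁻¹' Iic k)ᶜ,
    fun k => ⟨(hF k).isClosed.isOpen_compl, (hφF k).subset_compl_right⟩, fun x => ?_⟩
  refine (finite_Iio (f x)).subset fun k hk => ?_
  simpa using hk
end
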